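/- Let d, k be positive integers with 1 ≤ k ≤ d, r = √((d − k)/d), G ≥ 0, and M a positive integer. For each device m ∈ {1, …, M}, let (g_m^{(t)})_{t≥1} be vectors in ℝ^d with ‖g_m^{(t)}‖ ≤ G for all t, define Δ_m^{(1)} = 0 and Δ_m^{(t+1)} = (g_m^{(t)} + Δ_m^{(t)}) − sp(g_m^{(t)} + Δ_m^{(t)}, k), where sp(x, k) keeps k entries of x of largest absolute value and zeroes the rest. Let K_1, …, K_M ≥ 0 with ∑_m K_m > 0, and define the sparsification error e₁^{(t)} = (∑_{m=1}^M K_m (Δ_m^{(t+1)} − Δ_m^{(t)})) / (∑_{m=1}^M K_m). Then for every t ≥ 1, ‖e₁^{(t)}‖² ≤ ((2r − r^{t} − r^{t+1})/(1 − r))²·G². -/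

import Mathlib

/-!
Zeroing the `k` largest coordinates of `x` leaves a vector of norm at most `r‖x‖`: each of the
`d - k` remaining squares is at most the mean of the `k` zeroed ones, so their sum is at most a
`(d - k)/d` fraction of `‖x‖²`. Hence the error accumulators satisfy `‖Δ(t+1)‖ ≤ r (G + ‖Δ t‖)`
with `Δ 1 = 0`, so `‖Δ t‖ ≤ G (r - r^t)/(1 - r)`. The increment `Δ(t+1) - Δ t` is bounded by the
sum of two such bounds, and a weighted average of vectors in a ball stays in that ball.
-/

open Finset

theorem Finset.card_mul_sum_le_card_mul_sum {ι R : Type*} [CommSemiring R] [PartialOrder R]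
    [IsOrderedRing R] {s t : Finset ι} {f : ι → R} (h : ∀ i ∈ s, ∀ j ∈ t, f j ≤ f i) :
    (#s : R) * ∑ j ∈ t, f j ≤ #t * ∑ i ∈ s, f i := by
  calc (#s : R) * ∑ j ∈ t, f j = ∑ j ∈ t, ∑ _i ∈ s, f j := by
        simp only [sum_const, nsmul_eq_mul, mul_sum]
    _ ≤ ∑ _j ∈ t, ∑ i ∈ s, f i := sum_le_sum fun j hj => sum_le_sum fun i hi => h i hi j hj
    _ = #t * ∑ i ∈ s, f i := by rw [sum_const, nsmul_eq_mul]

section DropLargest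

variable {ι : Type*} [Fintype ι] [DecidableEq ι] {x y : EuclideanSpace ℝ ι} {S : Finset ι}

theorem EuclideanSpace.norm_sq_of_eq_ite_mem (hy : ∀ i, y i = if i ∈ S then 0 else x i) :
    ‖y‖ ^ 2 = ∑ i ∈ Sᶜ, x i ^ 2 := by
  rw [EuclideanSpace.real_norm_sq_eq, ← sum_add_sum_compl S]
  have h_on_S : ∑ i ∈ S, y i ^ 2 = 0 := sum_eq_zero fun i hi => by simp [hy, hi]
  rw [h_on_S, zero_add]
  exact sum_congr rfl fun i hi => by simp [hy, mem_compl.mp hi]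

theorem EuclideanSpace.card_mul_norm_sq_drop_largest_le
    (hS : ∀ i ∈ S, ∀ j ∉ S, |x j| ≤ |x i|) (hy : ∀ i, y i = if i ∈ S then 0 else x i) :
    (Fintype.card ι : ℝ) * ‖y‖ ^ 2 ≤ (Fintype.card ι - #S) * ‖x‖ ^ 2 := by
  have hcard : (#Sᶜ : ℝ) = Fintype.card ι - #S := by
    rw [card_compl, Nat.cast_sub (card_le_univ S)]
  have hsplit : ‖x‖ ^ 2 = ∑ i ∈ S, x i ^ 2 + ∑ i ∈ Sᶜ, x i ^ 2 := by
    rw [EuclideanSpace.real_norm_sq_eq, sum_add_sum_compl]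
  have hdropped : (#S : ℝ) * ∑ j ∈ Sᶜ, x j ^ 2 ≤ #Sᶜ * ∑ i ∈ S, x i ^ 2 :=
    card_mul_sum_le_card_mul_sum fun i hi j hj => sq_le_sq.mpr (hS i hi j (mem_compl.mp hj))
  rw [EuclideanSpace.norm_sq_of_eq_ite_mem hy, hsplit, ← hcard]
  have hcard_univ : (Fintype.card ι : ℝ) = #S + #Sᶜ := by
    rw [hcard]; ring
  rw [hcard_univ]
  linarith

theorem EuclideanSpace.norm_drop_largest_le
    (hS : ∀ i ∈ S, ∀ j ∉ S, |x j| ≤ |x i|) (hy : ∀ i, y i = if i ∈ S then 0 else x i) :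
    ‖y‖ ≤ √((Fintype.card ι - #S) / Fintype.card ι) * ‖x‖ := by
  rcases isEmpty_or_nonempty ι with hι | hι
  · simp [Subsingleton.elim y 0]
  have hsq : ‖y‖ ^ 2 ≤ (Fintype.card ι - #S) / Fintype.card ι * ‖x‖ ^ 2 := by
    rw [div_mul_eq_mul_div, le_div_iff₀ (by positivity), mul_comm]
    exact card_mul_norm_sq_drop_largest_le hS hy
  calc ‖y‖ = √(‖y‖ ^ 2) := (Real.sqrt_sq (norm_nonneg y)).symm
    _ ≤ √((Fintype.card ι - #S) / Fintype.card ι * ‖x‖ ^ 2) := Real.sqrt_le_sqrt hsq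
    _ = √((Fintype.card ι - #S) / Fintype.card ι) * ‖x‖ := by
        rw [Real.sqrt_mul' _ (sq_nonneg _), Real.sqrt_sq (norm_nonneg x)]

end DropLargest

theorem Real.sqrt_sub_div_lt_one {d k : ℕ} (hk : 1 ≤ k) : √(((d : ℝ) - k) / d) < 1 := by
  rcases Nat.eq_zero_or_pos d with rfl | hd
  · simp
  rw [Real.sqrt_lt' one_pos, one_pow, div_lt_one (by positivity)]
  have : (1 : ℝ) ≤ k := by exact_mod_cast hk
  linarith

theorem le_geom_of_le_mul_add {a : ℕ → ℝ} {r G : ℝ} (hr0 : 0 ≤ r) (hr1 : r ≠ 1)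
    (h1 : a 1 ≤ 0) (hstep : ∀ t ≥ 1, a (t + 1) ≤ r * (G + a t)) :
    ∀ t ≥ 1, a t ≤ G * (r - r ^ t) / (1 - r) := by
  have h1r : 1 - r ≠ 0 := sub_ne_zero.mpr hr1.symm
  intro t ht
  induction t, ht using Nat.le_induction with
  | base => simpa using h1
  | succ t ht ih =>
    calc a (t + 1) ≤ r * (G + a t) := hstep t ht
      _ ≤ r * (G + G * (r - r ^ t) / (1 - r)) := by gcongr
      _ = G * (r - r ^ (t + 1)) / (1 - r) := by field_simp; ring

theorem norm_centerMass_le {ι E : Type*} [SeminormedAddCommGroup E] [NormedSpace ℝ E]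
    {s : Finset ι} {w : ι → ℝ} {z : ι → E} {C : ℝ} (hw : ∀ i ∈ s, 0 ≤ w i)
    (hpos : 0 < ∑ i ∈ s, w i) (hz : ∀ i ∈ s, ‖z i‖ ≤ C) : ‖s.centerMass w z‖ ≤ C := by
  simpa using (convex_closedBall (0 : E) C).centerMass_mem hw hpos fun i hi => by simpa using hz i hi

theorem stmt_8_general (d k : ℕ) (hk1 : 1 ≤ k)
    (r : ℝ) (hr : r = Real.sqrt (((d : ℝ) - k) / d))
    (G : ℝ) (M : ℕ)
    (g Δ : Fin M → ℕ → EuclideanSpace ℝ (Fin d))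
    (hg : ∀ m, ∀ t ≥ 1, ‖g m t‖ ≤ G)
    (hΔ1 : ∀ m, Δ m 1 = 0)
    (hΔ : ∀ m, ∀ t ≥ 1, ∃ S : Finset (Fin d), S.card = k ∧
      (∀ i ∈ S, ∀ j ∉ S, |(g m t + Δ m t) j| ≤ |(g m t + Δ m t) i|) ∧
      ∀ i, Δ m (t + 1) i = if i ∈ S then 0 else (g m t + Δ m t) i)
    (K : Fin M → ℝ) (hK : ∀ m, 0 ≤ K m) (hKpos : 0 < ∑ m, K m)
    (e₁ : ℕ → EuclideanSpace ℝ (Fin d))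
    (he₁ : ∀ t, e₁ t = (∑ m, K m)⁻¹ • ∑ m, K m • (Δ m (t + 1) - Δ m t)) :
    ∀ t ≥ 1, ‖e₁ t‖ ^ 2 ≤ ((2 * r - r ^ t - r ^ (t + 1)) / (1 - r)) ^ 2 * G ^ 2 := by
  have hr0 : 0 ≤ r := hr ▸ Real.sqrt_nonneg _
  have hr1 : r ≠ 1 := (hr ▸ Real.sqrt_sub_div_lt_one hk1).ne
  have hstep : ∀ m, ∀ t ≥ 1, ‖Δ m (t + 1)‖ ≤ r * (G + ‖Δ m t‖) := by
    intro m t ht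
    obtain ⟨S, hcard, hS, hy⟩ := hΔ m t ht
    calc ‖Δ m (t + 1)‖ ≤ r * ‖g m t + Δ m t‖ := by
          simpa [hr, hcard] using EuclideanSpace.norm_drop_largest_le hS hy
      _ ≤ r * (G + ‖Δ m t‖) := by gcongr; exact (norm_add_le _ _).trans (by gcongr; exact hg m t ht)
  have hΔle : ∀ m, ∀ t ≥ 1, ‖Δ m t‖ ≤ G * (r - r ^ t) / (1 - r) := fun m =>
    le_geom_of_le_mul_add hr0 hr1 (by simp [hΔ1 m]) (hstep m)
  intro t ht
  have hinc : ∀ m ∈ univ, ‖Δ m (t + 1) - Δ m t‖ ≤ (2 * r - r ^ t - r ^ (t + 1)) / (1 - r) * G := by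
    intro m _
    calc ‖Δ m (t + 1) - Δ m t‖ ≤ ‖Δ m (t + 1)‖ + ‖Δ m t‖ := norm_sub_le _ _
      _ ≤ G * (r - r ^ (t + 1)) / (1 - r) + G * (r - r ^ t) / (1 - r) :=
          add_le_add (hΔle m (t + 1) (by omega)) (hΔle m t ht)
      _ = (2 * r - r ^ t - r ^ (t + 1)) / (1 - r) * G := by ring
  have he : ‖e₁ t‖ ≤ (2 * r - r ^ t - r ^ (t + 1)) / (1 - r) * G := by
    rw [he₁ t]
    exact norm_centerMass_le (fun m _ => hK m) hKpos hinc
  rw [← mul_pow]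
  exact pow_le_pow_left₀ (norm_nonneg _) he 2

/-- Sparsification-error bound (32): the weighted average of the increments of
the per-device error-accumulation sequences is geometrically bounded. -/
theorem stmt_8 (d k : ℕ) (hk1 : 1 ≤ k) (hkd : k ≤ d)
    (r : ℝ) (hr : r = Real.sqrt (((d : ℝ) - k) / d))
    (G : ℝ) (hG : 0 ≤ G) (M : ℕ) (hM : 0 < M)
    (g Δ : Fin M → ℕ → EuclideanSpace ℝ (Fin d))
    (hg : ∀ m, ∀ t ≥ 1, ‖g m t‖ ≤ G)
    (hΔ1 : ∀ m, Δ m 1 = 0)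
    (hΔ : ∀ m, ∀ t ≥ 1, ∃ S : Finset (Fin d), S.card = k ∧
      (∀ i ∈ S, ∀ j ∉ S, |(g m t + Δ m t) j| ≤ |(g m t + Δ m t) i|) ∧
      ∀ i, Δ m (t + 1) i = if i ∈ S then 0 else (g m t + Δ m t) i)
    (K : Fin M → ℝ) (hK : ∀ m, 0 ≤ K m) (hKpos : 0 < ∑ m, K m)
    (e₁ : ℕ → EuclideanSpace ℝ (Fin d))
    (he₁ : ∀ t, e₁ t = (∑ m, K m)⁻¹ • ∑ m, K m • (Δ m (t + 1) - Δ m t)) :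
    ∀ t ≥ 1, ‖e₁ t‖ ^ 2 ≤ ((2 * r - r ^ t - r ^ (t + 1)) / (1 - r)) ^ 2 * G ^ 2 :=
  stmt_8_general d k hk1 r hr G M g Δ hg hΔ1 hΔ K hK hKpos e₁ he₁
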